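/- arXiv:2410.14460 — 2 statements merged into one kernel-verified Lean document; each statement's English description precedes it below -/
import Mathlib

section
/- For relational connectors K : F → G and L : G → H between Set functors, the composite L · K, defined on a relation r : X ⇸ Z by (L · K)r = ⋃ { Ls · Kt | t : X ⇸ Y, s : Y ⇸ Z, s · t = r, Y ranging over all sets }, is itself a relational connector F → H; that is, it satisfies monotonicity and naturality. -/
open CategoryTheory

universe u

/-- A `Set` functor: a functor from the category of sets (types) to itself. -/
abbrev SetFunctor : Type (u + 1) := CategoryTheory.Functor (Type u) (Type u)

/-- Applicative-order composition of relations: `(rcomp s r) x z ↔ ∃ y, r x y ∧ s y z`,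
i.e. `s · r` in the notation of the paper. -/
def rcomp {X Y Z : Type u} (s : Y → Z → Prop) (r : X → Y → Prop) : X → Z → Prop :=
  fun x z => ∃ y, r x y ∧ s y z

/-- Relational converse `r°`. -/
def rconv {X Y : Type u} (r : X → Y → Prop) : Y → X → Prop := fun y x => r x y

/-- The graph of a function, identifying functions with relations. -/
def graph {X Y : Type u} (f : X → Y) : X → Y → Prop := fun x y => f x = y

/-- The diagonal relation `Δ_X`. -/
def diag (X : Type u) : X → X → Prop := fun x y => x = y

/-- Relational image `r[A]`. -/
def rimage {X Y : Type u} (r : X → Y → Prop) (A : Set X) : Set Y :=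
  {y | ∃ x ∈ A, r x y}

/-- The pointwise product of two `Set` functors. -/
def prodFunctor (F₁ F₂ : SetFunctor.{u}) : SetFunctor.{u} where
  obj X := F₁.obj X × F₂.obj X
  map f := TypeCat.ofHom fun p => (F₁.map f p.1, F₂.map f p.2)
  map_id X := by ext p <;> simp
  map_comp f g := by ext p <;> simp

/-- An assignment of relations `F X ⇸ G Y` to relations `X ⇸ Y`; a relational connector
is such an assignment satisfying monotonicity and naturality (`RelConn.IsConnector`). -/
structure RelConn (F G : SetFunctor.{u}) : Type (u + 1) where
  rel : ∀ {X Y : Type u}, (X → Y → Prop) → F.obj X → G.obj Y → Prop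

namespace RelConn

variable {F G H V : SetFunctor.{u}}

/-- Monotonicity: `r₁ ⊆ r₂` implies `L r₁ ⊆ L r₂`. -/
def Mono (L : RelConn F G) : Prop :=
  ∀ (X Y : Type u) (r₁ r₂ : X → Y → Prop), (∀ x y, r₁ x y → r₂ x y) →
    ∀ a b, L.rel r₁ a b → L.rel r₂ a b

/-- Naturality: `L(g° · r · f) = (G g)° · L r · F f`. -/
def Natural (L : RelConn F G) : Prop :=
  ∀ (X X' Y Y' : Type u) (f : X' → X) (g : Y' → Y) (r : X → Y → Prop),
    L.rel (rcomp (rconv (graph g)) (rcomp r (graph f))) =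
      rcomp (rconv (graph (G.map (TypeCat.ofHom g)))) (rcomp (L.rel r) (graph (F.map (TypeCat.ofHom f))))

/-- A relational connector: a monotone and natural assignment of relations. -/
def IsConnector (L : RelConn F G) : Prop := L.Mono ∧ L.Natural

/-- The pointwise order on connectors: `L ≤ K` iff `L r ⊆ K r` for all `r`. -/
def le (L K : RelConn F G) : Prop :=
  ∀ (X Y : Type u) (r : X → Y → Prop) (a : F.obj X) (b : G.obj Y), L.rel r a b → K.rel r a b

/-- The composite `L · K` of relational connectors:
`(L · K) r = ⋃ { L s · K t | s · t = r }`, the join over all factorizations of `r`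
through an arbitrary intermediate set `Y`. -/
def comp (L : RelConn G H) (K : RelConn F G) : RelConn F H where
  rel := fun {X Z} r a c => ∃ (Y : Type u) (t : X → Y → Prop) (s : Y → Z → Prop),
    rcomp s t = r ∧ ∃ b, K.rel t a b ∧ L.rel s b c

/-- The converse `L°` of a connector: `L° r = (L (r°))°`. -/
def conv (L : RelConn F G) : RelConn G F where
  rel := fun {X Y} r b a => L.rel (rconv r) a b

/-- The meet (pointwise intersection) of two connectors. -/
def meet (L K : RelConn F G) : RelConn F G where
  rel := fun {X Y} r a b => L.rel r a b ∧ K.rel r a b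

/-- The product `L₁ × L₂` of connectors. -/
def prod {F₁ F₂ G₁ G₂ : SetFunctor.{u}} (L₁ : RelConn F₁ G₁) (L₂ : RelConn F₂ G₂) :
    RelConn (prodFunctor F₁ F₂) (prodFunctor G₁ G₂) where
  rel := fun {X Y} r p q => L₁.rel r (Prod.fst p) (Prod.fst q) ∧ L₂.rel r (Prod.snd p) (Prod.snd q)

/-- The identity relational connector `id_F`: `b (id_F r) c` iff for all set functors `G`,
all relational connectors `L : G → F`, all `s : Z ⇸ X` and `a ∈ G Z`,
`a (L s) b` implies `a (L (r · s)) c`. -/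
def id (F : SetFunctor.{u}) : RelConn F F where
  rel := fun {X Y} r b c =>
    ∀ (G : SetFunctor.{u}) (L : RelConn G F), L.IsConnector →
      ∀ (Z : Type u) (s : Z → X → Prop) (a : G.obj Z),
        L.rel s a b → L.rel (rcomp r s) a c

/-- A connector `L : F → F` is transitive if `L · L ≤ L`. -/
def Transitive (L : RelConn F F) : Prop := (L.comp L).le L

/-- A connector `L : F → F` is symmetric if `L° ≤ L`. -/
def Symmetric (L : RelConn F F) : Prop := L.conv.le L

/-- A connector `L : F → F` extends `F` if `Δ_{F X} ⊆ L Δ_X` for all `X`. -/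
def ExtendsF (L : RelConn F F) : Prop :=
  ∀ (X : Type u) (a b : F.obj X), diag (F.obj X) a b → L.rel (diag X) a b

/-- Condition (L2) of lax extensions: `L s · L r ⊆ L (s · r)`. -/
def LaxL2 (L : RelConn F F) : Prop :=
  ∀ (X Y Z : Type u) (r : X → Y → Prop) (s : Y → Z → Prop) (a : F.obj X) (c : F.obj Z),
    rcomp (L.rel s) (L.rel r) a c → L.rel (rcomp s r) a c

/-- Condition (L3) of lax extensions: `F f ⊆ L f` and `(F f)° ⊆ L (f°)`. -/
def LaxL3 (L : RelConn F F) : Prop :=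
  ∀ (X Y : Type u) (f : X → Y),
    (∀ a b, graph (F.map (TypeCat.ofHom f)) a b → L.rel (graph f) a b) ∧
    (∀ b a, rconv (graph (F.map (TypeCat.ofHom f))) b a → L.rel (rconv (graph f)) b a)

/-- A lax extension of `F`: an assignment of relations satisfying (L1) monotonicity,
(L2) and (L3). -/
def IsLaxExtension (L : RelConn F F) : Prop := L.Mono ∧ L.LaxL2 ∧ L.LaxL3

/-- A connector `L : F → G` extends a natural transformation `α : F ⇒ G` if the graph of
`α_X` is contained in `L Δ_X` for all sets `X`. -/
def Extends (L : RelConn F G) (α : F ⟶ G) : Prop :=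
  ∀ (X : Type u) (a : F.obj X) (b : G.obj X), graph (α.app X) a b → L.rel (diag X) a b

end RelConn

/-- The connector `id_G • α` obtained from a natural transformation `α : F ⇒ G`:
`(id_G • α) r = (id_G r) · α_X`. -/
def idBullet {F G : SetFunctor.{u}} (α : F ⟶ G) : RelConn F G where
  rel := fun {X Y} r => rcomp ((RelConn.id G).rel r) (graph (α.app X))

/-- The intermediate set of the couniversal factorization of `r : X ⇸ Z`:
`{(A,B) ∈ P(X) × P(Z) | A × B ⊆ r}`. -/
def CoInt {X Z : Type u} (r : X → Z → Prop) : Type u :=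
  {p : Set X × Set Z // ∀ x ∈ p.1, ∀ z ∈ p.2, r x z}

/-- The first leg `t = {(x,(A,B)) | x ∈ A}` of the couniversal factorization. -/
def coT {X Z : Type u} (r : X → Z → Prop) : X → CoInt r → Prop := fun x p => x ∈ p.1.1

/-- The second leg `s = {((A,B),z) | z ∈ B}` of the couniversal factorization. -/
def coS {X Z : Type u} (r : X → Z → Prop) : CoInt r → Z → Prop := fun p z => z ∈ p.1.2

/-- `f : (C,γ) → (D,δ)` is a morphism of `F`-coalgebras: `F f ∘ γ = δ ∘ f`. -/
def IsCoalgMor {F : SetFunctor.{u}} {C D : Type u} (γ : C → F.obj C) (δ : D → F.obj D)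
    (f : C → D) : Prop := ∀ x, F.map (TypeCat.ofHom f) (γ x) = δ (f x)

/-- `r : C ⇸ D` is an `L`-simulation between the `F`-coalgebra `(C,γ)` and the
`G`-coalgebra `(D,δ)`: `x r y` implies `γ x (L r) δ y`. -/
def IsSim {F G : SetFunctor.{u}} (L : RelConn F G) {C D : Type u}
    (γ : C → F.obj C) (δ : D → G.obj D) (r : C → D → Prop) : Prop :=
  ∀ x y, r x y → L.rel r (γ x) (δ y)

/-- `L`-similarity: `x ≼_L y` iff some `L`-simulation relates `x` to `y`. -/
def RelSimilar {F G : SetFunctor.{u}} (L : RelConn F G) {C D : Type u}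
    (γ : C → F.obj C) (δ : D → G.obj D) : C → D → Prop :=
  fun x y => ∃ r, IsSim L γ δ r ∧ r x y

/-- `r : C ⇸ D` is an `L`-bisimulation (for `L : F → F`): both `r` and `r°`
are `L`-simulations. -/
def IsBisim {F : SetFunctor.{u}} (L : RelConn F F) {C D : Type u}
    (γ : C → F.obj C) (δ : D → F.obj D) (r : C → D → Prop) : Prop :=
  IsSim L γ δ r ∧ IsSim L δ γ (rconv r)

/-- `L`-bisimilarity: `x ≃_L y` iff some `L`-bisimulation relates `x` to `y`. -/
def Bisimilar {F : SetFunctor.{u}} (L : RelConn F F) {C D : Type u}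
    (γ : C → F.obj C) (δ : D → F.obj D) : C → D → Prop :=
  fun x y => ∃ r, IsBisim L γ δ r ∧ r x y

/-- Heterogeneous `L`-bisimulation for `L : F → G`: `r` is an `L`-simulation and `r°`
is an `L°`-simulation. -/
def IsBisimHet {F G : SetFunctor.{u}} (L : RelConn F G) {C D : Type u}
    (γ : C → F.obj C) (δ : D → G.obj D) (r : C → D → Prop) : Prop :=
  IsSim L γ δ r ∧ IsSim L.conv δ γ (rconv r)

/-- Heterogeneous `L`-bisimilarity for `L : F → G`. -/
def BisimilarHet {F G : SetFunctor.{u}} (L : RelConn F G) {C D : Type u}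
    (γ : C → F.obj C) (δ : D → G.obj D) : C → D → Prop :=
  fun x y => ∃ r, IsBisimHet L γ δ r ∧ r x y

/-- An `n`-ary predicate lifting for a `Set` functor `F`: a natural transformation
`(2^(-))ⁿ ⇒ 2^(F -)` with the contravariant powerset functor. -/
structure PredLifting (F : SetFunctor.{u}) (n : ℕ) : Type (u + 1) where
  app : ∀ (X : Type u), (Fin n → Set X) → Set (F.obj X)
  natural : ∀ (X Y : Type u) (f : X → Y) (A : Fin n → Set Y) (a : F.obj X),
    F.map (TypeCat.ofHom f) a ∈ app Y A ↔ a ∈ app X (fun i => f ⁻¹' (A i))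

/-- Monotonicity of a predicate lifting. -/
def PredLifting.IsMonotone {F : SetFunctor.{u}} {n : ℕ} (lam : PredLifting F n) : Prop :=
  ∀ (X : Type u) (A B : Fin n → Set X), (∀ i, A i ⊆ B i) → lam.app X A ⊆ lam.app X B

/-- The dual predicate lifting `λ̄_X(A₁,…,Aₙ) = F X \ λ_X(X\A₁,…,X\Aₙ)`. -/
def PredLifting.dual {F : SetFunctor.{u}} {n : ℕ} (lam : PredLifting F n) :
    PredLifting F n where
  app X A := (lam.app X fun i => (A i)ᶜ)ᶜ
  natural := by
    intro X Y f A a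
    simp only [Set.mem_compl_iff, lam.natural, Set.preimage_compl]

/-- The Kantorovich connector `L_Λ` induced by an arity-preserving relation `Λ` between
monotone predicate liftings of `F` and of `G`: `a (L_Λ r) b` iff for every `n`-ary pair
`(λ,μ) ∈ Λ` and all `A₁,…,Aₙ ⊆ X`, `a ∈ λ_X(A₁,…,Aₙ)` implies `b ∈ μ_Y(r[A₁],…,r[Aₙ])`. -/
def kantorovich {F G : SetFunctor.{u}}
    (Λ : ∀ n : ℕ, PredLifting F n → PredLifting G n → Prop) : RelConn F G where
  rel := fun {X Y} r a b =>
    ∀ (n : ℕ) (lam : PredLifting F n) (mu : PredLifting G n), Λ n lam mu →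
      ∀ A : Fin n → Set X, a ∈ lam.app X A → b ∈ mu.app Y (fun i => rimage r (A i))


/-!
Any factorization `s · t ⊆ r` with `a (K t) b (L s) c` already witnesses `a ((L · K) r) c`:
enlarging the intermediate set `Y` to `Y ⊕ X` and sending `x` along `inr x` and then `r`
turns `s · t ⊆ r` into an exact factorization of `r`, and naturality moves `K t` and `L s`
along `inl`. Monotonicity is then immediate, and each inclusion of naturality follows by
transporting a factorization along `f` and `g`, which only preserves it up to `⊆`.
-/

theorem SetFunctor.map_ofHom_id_apply (F : SetFunctor.{u}) {X : Type u} (a : F.obj X) :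
    F.map (TypeCat.ofHom (id : X → X)) a = a :=
  F.map_id_apply X a

namespace RelConn

variable {F G H : SetFunctor.{u}} {K : RelConn F G} {L : RelConn G H}

theorem rel_of_rel_map (hK : K.Natural) {X X' Y Y' : Type u} {f : X' → X} {g : Y' → Y}
    {r : X → Y → Prop} {a : F.obj X'} {b : G.obj Y'}
    (h : K.rel r (F.map (TypeCat.ofHom f) a) (G.map (TypeCat.ofHom g) b)) :
    K.rel (rcomp (rconv (graph g)) (rcomp r (graph f))) a b := by
  rw [hK]
  exact ⟨_, ⟨_, rfl, h⟩, rfl⟩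

theorem rel_map_of_rel (hK : K.IsConnector) {X X' Y Y' : Type u} (f : X' → X) (g : Y' → Y)
    {r : X' → Y' → Prop} {a : F.obj X'} {b : G.obj Y'} (h : K.rel r a b) :
    K.rel (rcomp (graph g) (rcomp r (rconv (graph f))))
      (F.map (TypeCat.ofHom f) a) (G.map (TypeCat.ofHom g) b) := by
  set q := rcomp (graph g) (rcomp r (rconv (graph f)))
  have hr : r ≤ rcomp (rconv (graph g)) (rcomp q (graph f)) :=
    fun x y hr => ⟨g y, ⟨f x, rfl, y, ⟨x, rfl, hr⟩, rfl⟩, rfl⟩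
  have h' := hK.1 _ _ _ _ hr a b h
  rw [hK.2] at h'
  obtain ⟨_, ⟨_, rfl, h'⟩, rfl⟩ := h'
  exact h'

theorem comp_rel_of_rcomp_le (hK : K.IsConnector) (hL : L.IsConnector) {X Y Z : Type u}
    {t : X → Y → Prop} {s : Y → Z → Prop} {r : X → Z → Prop} (hr : rcomp s t ≤ r)
    {a : F.obj X} {b : G.obj Y} {c : H.obj Z} (ht : K.rel t a b) (hs : L.rel s b c) :
    (L.comp K).rel r a c := by
  refine ⟨Y ⊕ X, fun x => Sum.elim (t x) (x = ·), Sum.elim s r, ?_,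
    G.map (TypeCat.ofHom Sum.inl) b, ?_, ?_⟩
  · funext x z
    apply propext
    constructor
    · rintro ⟨(y | x), hxy, hyz⟩
      · exact hr _ _ ⟨y, hxy, hyz⟩
      · exact hxy ▸ hyz
    · exact fun h => ⟨Sum.inr x, rfl, h⟩
  · have ht' := rel_map_of_rel hK _root_.id (Sum.inl : Y → Y ⊕ X) ht
    rw [SetFunctor.map_ofHom_id_apply] at ht'
    refine hK.1 _ _ _ _ ?_ _ _ ht'
    rintro x _ ⟨y, ⟨_, rfl, hxy⟩, rfl⟩
    exact hxy
  · have hs' := rel_map_of_rel hL (Sum.inl : Y → Y ⊕ X) _root_.id hs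
    rw [SetFunctor.map_ofHom_id_apply] at hs'
    refine hL.1 _ _ _ _ ?_ _ _ hs'
    rintro _ z ⟨_, ⟨y, rfl, hyz⟩, rfl⟩
    exact hyz

theorem comp_mono (hK : K.IsConnector) (hL : L.IsConnector) : (L.comp K).Mono := by
  rintro X Z r₁ r₂ hr a c ⟨Y, t, s, rfl, b, ht, hs⟩
  exact comp_rel_of_rcomp_le hK hL hr ht hs

theorem comp_natural (hK : K.IsConnector) (hL : L.IsConnector) : (L.comp K).Natural := by
  intro X X' Z Z' f g r
  funext a c
  apply propext
  constructor
  · rintro ⟨Y, t, s, hst, b, ht, hs⟩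
    refine ⟨H.map (TypeCat.ofHom g) c, ⟨F.map (TypeCat.ofHom f) a, rfl, ?_⟩, rfl⟩
    refine comp_rel_of_rcomp_le hK hL ?_
      (rel_map_of_rel hK f _root_.id ht) (rel_map_of_rel hL _root_.id g hs)
    rintro _ _ ⟨_, ⟨y, ⟨x, rfl, hxy⟩, rfl⟩, z, ⟨y', hy, hyz⟩, rfl⟩
    obtain rfl : y' = y := hy
    have hr : rcomp s t x z := ⟨_, hxy, hyz⟩
    rw [hst] at hr
    obtain ⟨_, ⟨_, rfl, hr⟩, rfl⟩ := hr
    exact hr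
  · rintro ⟨_, ⟨_, rfl, Y, t, s, rfl, b, ht, hs⟩, rfl⟩
    rw [← SetFunctor.map_ofHom_id_apply G b] at ht hs
    refine comp_rel_of_rcomp_le hK hL ?_ (rel_of_rel_map hK.2 ht) (rel_of_rel_map hL.2 hs)
    rintro x z ⟨_, ⟨_, ⟨_, rfl, hxy⟩, rfl⟩, _, ⟨_, rfl, hyz⟩, rfl⟩
    exact ⟨_, ⟨_, rfl, _, hxy, hyz⟩, rfl⟩

end RelConn

/-- The composite `L · K` of relational connectors `K : F → G` and
`L : G → H` is itself a relational connector, i.e. it is monotone and natural. -/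
theorem composite_isConnector (F G H : SetFunctor.{u})
    (K : RelConn F G) (L : RelConn G H)
    (hK : K.IsConnector) (hL : L.IsConnector) :
    (L.comp K).IsConnector :=
  ⟨RelConn.comp_mono hK hL, RelConn.comp_natural hK hL⟩
end

section
/- Let K : F → G and L : G → H be relational connectors between Set functors, let (C,γ) be an F-coalgebra, (D,δ) a G-coalgebra, and (E,ε) an H-coalgebra. If r : C ⇸ D is a K-simulation and s : D ⇸ E is an L-simulation, then the composite s · r : C ⇸ E is an (L · K)-simulation. -/
open CategoryTheory

universe u

/-- `L`-similarity: `x ≼_L y` iff some `L`-simulation relates `x` to `y`. -/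
def Similar' {F G : SetFunctor.{u}} (L : RelConn F G) {C D : Type u}
    (γ : C → F.obj C) (δ : D → G.obj D) : C → D → Prop :=
  fun x y => ∃ r, IsSim L γ δ r ∧ r x y

theorem RelConn.comp_rel_rcomp {F G H : SetFunctor.{u}} {L : RelConn G H} {K : RelConn F G}
    {X Y Z : Type u} {t : X → Y → Prop} {s : Y → Z → Prop} {a : F.obj X} {b : G.obj Y}
    {c : H.obj Z} (ht : K.rel t a b) (hs : L.rel s b c) : (L.comp K).rel (rcomp s t) a c :=
  ⟨Y, t, s, rfl, b, ht, hs⟩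

theorem sim_comp_general (F G H : SetFunctor.{u}) (K : RelConn F G) (L : RelConn G H)
    (C D E : Type u) (γ : C → F.obj C) (δ : D → G.obj D) (ε : E → H.obj E)
    (r : C → D → Prop) (s : D → E → Prop)
    (hr : IsSim K γ δ r) (hs : IsSim L δ ε s) :
    IsSim (L.comp K) γ ε (rcomp s r) := by
  rintro x z ⟨y, hxy, hyz⟩
  exact RelConn.comp_rel_rcomp (hr x y hxy) (hs y z hyz)

/-- the composite `s · r` of a `K`-simulation `r : C ⇸ D` and an
`L`-simulation `s : D ⇸ E` is an `(L · K)`-simulation. -/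
theorem sim_comp (F G H : SetFunctor.{u}) (K : RelConn F G) (L : RelConn G H)
    (hK : K.IsConnector) (hL : L.IsConnector)
    (C D E : Type u) (γ : C → F.obj C) (δ : D → G.obj D) (ε : E → H.obj E)
    (r : C → D → Prop) (s : D → E → Prop)
    (hr : IsSim K γ δ r) (hs : IsSim L δ ε s) :
    IsSim (L.comp K) γ ε (rcomp s r) :=
  sim_comp_general F G H K L C D E γ δ ε r s hr hs
end
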